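/- Let λ ≥ 1, G a weighted connected graph with non-negative edge weights, and τ, τ* two spanning trees of G satisfying: for every edge e of τ, every edge of τ* crossing the cut induced by removing e from τ has weight at least w(e)/λ. Then w(τ \ τ*) ≤ λ · w(τ* \ τ), where for an edge set F, w(F) denotes the sum of weights of edges in F. -/

import Mathlib

/-!
Each edge `e ∈ τ \ τ*` can be matched injectively to an edge of `τ* \ τ` crossing the cut of `e`.
This is Hall's theorem: for a set `S ⊆ τ \ τ*`, the graph `(τ \ S) ∪ N(S)`, where `N(S)` is the set
of edges of `τ*` crossing the cut of some `e ∈ S`, contains a path between the ends of every edge of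
`τ*`, so it is connected, has at least `|τ|` edges, and therefore `|N(S)| ≥ |S|`. The cut condition
then gives `w(e) ≤ λ w(f)` for each matched pair `(e, f)`; sum over the matching.
-/

open Finset SimpleGraph

namespace SimpleGraph

variable {V : Type*}

theorem Preconnected.of_adj_reachable {G H : SimpleGraph V} (hG : G.Preconnected)
    (h : ∀ ⦃u v⦄, G.Adj u v → H.Reachable u v) : H.Preconnected := by
  intro u v
  obtain ⟨p⟩ := hG u v
  induction p with
  | nil => rfl
  | cons hadj _ ih => exact (h hadj).trans ih

theorem IsAcyclic.reachable_deleteEdges_of_forall {T : SimpleGraph V} (hT : T.IsAcyclic)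
    {s : Set (Sym2 V)} {c d : V} (hcd : T.Reachable c d)
    (h : ∀ e ∈ s, (T.deleteEdges {e}).Reachable c d) : (T.deleteEdges s).Reachable c d := by
  classical
  by_contra hs
  let p : T.Path c d := hcd.some.toPath
  obtain ⟨e, hes, hep⟩ := p.1.exists_mem_edges_of_not_reachable_deleteEdges hs
  obtain ⟨r⟩ := h e hes
  -- `p` is the only path from `c` to `d`, so the walk `r` avoiding `e` must use it.
  have hpr : p = (r.mapLe (deleteEdges_le _)).toPath := (hT.subsingleton_path c d).elim _ _
  have her : e ∈ r.edges := by
    rw [← Walk.edges_mapLe_eq_edges (deleteEdges_le {e})]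
    exact Walk.edges_toPath_subset_edges _ (hpr ▸ hep)
  simpa using r.edges_subset_edgeSet her

def CrossesCut (T : SimpleGraph V) (e f : Sym2 V) : Prop :=
  ∃ c d, f = s(c, d) ∧ ¬ (T.deleteEdges {e}).Reachable c d

variable [Fintype V] [DecidableEq V]

open Classical in
noncomputable def crossingEdges (T H : SimpleGraph V) [DecidableRel T.Adj] [DecidableRel H.Adj]
    (e : Sym2 V) : Finset (Sym2 V) :=
  {f ∈ H.edgeFinset \ T.edgeFinset | T.CrossesCut e f}

variable {T H : SimpleGraph V} [DecidableRel T.Adj] [DecidableRel H.Adj]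

theorem mem_crossingEdges {e f : Sym2 V} :
    f ∈ crossingEdges T H e ↔ f ∈ H.edgeFinset \ T.edgeFinset ∧ T.CrossesCut e f := by
  classical
  exact mem_filter

theorem IsTree.card_le_card_biUnion_crossingEdges (hT : T.IsTree) (hH : H.Connected)
    {S : Finset (Sym2 V)} (hS : S ⊆ T.edgeFinset \ H.edgeFinset) :
    #S ≤ #(S.biUnion (crossingEdges T H)) := by
  set C := S.biUnion (crossingEdges T H)
  let K := fromEdgeSet (↑(T.edgeFinset \ S ∪ C) : Set (Sym2 V))
  have hdel : T.deleteEdges ↑S ≤ K := fun x y hxy => by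
    rw [deleteEdges_adj] at hxy
    exact (fromEdgeSet_adj _).2 ⟨by simp [hxy.1, hxy.2], hxy.1.ne⟩
  have hK : K.Connected := by
    have := hH.nonempty
    refine ⟨hH.preconnected.of_adj_reachable fun c d hcd => ?_⟩
    by_cases hτ : s(c, d) ∈ T.edgeFinset
    · have hS' : s(c, d) ∉ S := fun h => (mem_sdiff.1 (hS h)).2 (by simpa using hcd)
      exact Adj.reachable ((fromEdgeSet_adj _).2 ⟨by simp [mem_edgeFinset.1 hτ, hS'], hcd.ne⟩)
    by_cases hcross : ∃ e ∈ S, T.CrossesCut e s(c, d)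
    · obtain ⟨e, he, hcr⟩ := hcross
      have hC : s(c, d) ∈ C := mem_biUnion.2 ⟨e, he, mem_crossingEdges.2
        ⟨mem_sdiff.2 ⟨by simpa using hcd, hτ⟩, hcr⟩⟩
      exact Adj.reachable ((fromEdgeSet_adj _).2 ⟨by simp [hC], hcd.ne⟩)
    · refine Reachable.mono hdel (hT.isAcyclic.reachable_deleteEdges_of_forall
        (hT.connected.preconnected c d) fun e he => ?_)
      by_contra h
      exact hcross ⟨e, he, c, d, rfl, h⟩
  have hKcard : Nat.card K.edgeSet ≤ #(T.edgeFinset \ S ∪ C) := by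
    calc Nat.card K.edgeSet ≤ Nat.card (↑(T.edgeFinset \ S ∪ C) : Set (Sym2 V)) :=
          Nat.card_mono (finite_toSet _) (edgeSet_fromEdgeSet _ ▸ Set.sdiff_subset)
      _ = _ := by rw [Nat.card_coe_set_eq, Set.ncard_coe_finset]
  have hST : S ⊆ T.edgeFinset := hS.trans sdiff_subset
  have hV := hK.card_vert_le_card_edgeSet_add_one
  rw [Nat.card_eq_fintype_card, ← hT.card_edgeFinset] at hV
  have hunion := card_union_le (T.edgeFinset \ S) C
  rw [card_sdiff_of_subset hST] at hunion
  have := card_le_card hST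
  omega

theorem IsTree.exists_injective_mem_crossingEdges (hT : T.IsTree) (hH : H.Connected) :
    ∃ F : ↥(T.edgeFinset \ H.edgeFinset) → Sym2 V,
      Function.Injective F ∧ ∀ e : ↥(T.edgeFinset \ H.edgeFinset), F e ∈ crossingEdges T H e := by
  refine (all_card_le_biUnion_card_iff_exists_injective _).1 fun s => ?_
  calc #s = #(s.image Subtype.val) := (card_image_of_injective _ Subtype.val_injective).symm
    _ ≤ #((s.image Subtype.val).biUnion (crossingEdges T H)) := by
        refine hT.card_le_card_biUnion_crossingEdges hH fun x hx => ?_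
        obtain ⟨e, -, rfl⟩ := mem_image.1 hx
        exact e.2
    _ = #(s.biUnion fun e => crossingEdges T H e) := by rw [image_biUnion]

end SimpleGraph

theorem Finset.sum_le_mul_sum_of_injective {α R : Type*} [CommSemiring R] [PartialOrder R]
    [IsOrderedRing R] {s t : Finset α} {w : α → R} {c : R} (hc : 0 ≤ c)
    (hw : ∀ j ∈ t, 0 ≤ w j) (F : s → α) (hF : Function.Injective F) (hFt : ∀ i, F i ∈ t)
    (hle : ∀ i : s, w i ≤ c * w (F i)) : ∑ i ∈ s, w i ≤ c * ∑ j ∈ t, w j := by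
  classical
  calc ∑ i ∈ s, w i = ∑ i : s, w i := (sum_coe_sort s w).symm
    _ ≤ ∑ i : s, c * w (F i) := sum_le_sum fun i _ => hle i
    _ = c * ∑ j ∈ univ.image F, w j := by rw [← mul_sum, sum_image hF.injOn]
    _ ≤ c * ∑ j ∈ t, w j := by
        refine mul_le_mul_of_nonneg_left
          (sum_le_sum_of_subset_of_nonneg ?_ fun j hj _ => hw j hj) hc
        rintro _ hj
        obtain ⟨i, -, rfl⟩ := mem_image.1 hj
        exact hFt i

theorem stmt1_general {V : Type*} [Fintype V] [DecidableEq V]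
    (w : Sym2 V → ℝ) (lam : ℝ) (hlam : 1 ≤ lam)
    (hw : ∀ e, 0 ≤ w e)
    (τ τs : SimpleGraph V) [DecidableRel τ.Adj] [DecidableRel τs.Adj]
    (hτ : τ.IsTree) (hτs : τs.IsTree)
    (hcut : ∀ a b : V, τ.Adj a b → ∀ c d : V, τs.Adj c d →
      ¬ (τ.deleteEdges {s(a, b)}).Reachable c d →
      w s(a, b) / lam ≤ w s(c, d)) :
    ∑ e ∈ τ.edgeFinset \ τs.edgeFinset, w e ≤
      lam * ∑ e ∈ τs.edgeFinset \ τ.edgeFinset, w e := by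
  have hlam₀ : 0 < lam := zero_lt_one.trans_le hlam
  have hcross_le : ∀ e ∈ τ.edgeSet, ∀ f ∈ τs.edgeSet, τ.CrossesCut e f → w e ≤ lam * w f := by
    rintro ⟨a, b⟩ hab f hf ⟨c, d, rfl, hcd⟩
    rw [← div_le_iff₀' hlam₀]
    exact hcut a b hab c d hf hcd
  obtain ⟨F, hF, hFcross⟩ := hτ.exists_injective_mem_crossingEdges hτs.connected
  refine sum_le_mul_sum_of_injective hlam₀.le (fun f _ => hw f) F hF
    (fun e => (mem_crossingEdges.1 (hFcross e)).1) fun e => ?_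
  obtain ⟨hFe, hcr⟩ := mem_crossingEdges.1 (hFcross e)
  exact hcross_le e (mem_edgeFinset.1 (mem_sdiff.1 e.2).1) (F e)
    (mem_edgeFinset.1 (mem_sdiff.1 hFe).1) hcr

/-- Under the same cut condition as Statement 0,
w(τ \ τ*) ≤ λ · w(τ* \ τ). -/
theorem stmt1 {V : Type*} [Fintype V] [DecidableEq V]
    (G : SimpleGraph V) (w : Sym2 V → ℝ) (lam : ℝ) (hlam : 1 ≤ lam)
    (hw : ∀ e, 0 ≤ w e) (hG : G.Connected)
    (τ τs : SimpleGraph V) [DecidableRel τ.Adj] [DecidableRel τs.Adj]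
    (hτG : τ ≤ G) (hτsG : τs ≤ G)
    (hτ : τ.IsTree) (hτs : τs.IsTree)
    (hcut : ∀ a b : V, τ.Adj a b → ∀ c d : V, τs.Adj c d →
      ¬ (τ.deleteEdges {s(a, b)}).Reachable c d →
      w s(a, b) / lam ≤ w s(c, d)) :
    ∑ e ∈ τ.edgeFinset \ τs.edgeFinset, w e ≤
      lam * ∑ e ∈ τs.edgeFinset \ τ.edgeFinset, w e :=
  stmt1_general w lam hlam hw τ τs hτ hτs hcut
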